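/- Let R be a canonically ordered tree of order n with vertices labelled in pre-order and weight sequence s_1 s_2 ... s_n. Then the pair (ws(R(v_2)), ws(R - R(v_2))) lies in A_{s_2}(n): both trees are canonically ordered, ws(R(v_2)) = s_2 ... s_{s_2+1}, ws(R - R(v_2)) = (n - s_2) ⊕ s_{s_2+2} ... s_n, and ws(R(v_2)) ≽ (ws(R - R(v_2)))^#. -/

import Mathlib

/-!
The weight sequence of `node (c :: cs)` is its order followed by `ws c` and then the weight
sequences of the remaining children, so both splitting identities are list bookkeeping. For
`ws c ≽ (ws (node cs))^#` compare `c` with its next sibling `c'`: canonicity gives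
`ws c' ≤ ws c`, and since a weight sequence begins with its own length, `ws c'` can be a prefix
of `ws c` only when the two are equal.
-/

inductive OTree : Type
  | node : List OTree → OTree

namespace OTree

def size : OTree → ℕ
  | .node cs => (cs.attach.map (fun c => size c.1)).sum + 1
decreasing_by simp only [OTree.node.sizeOf_spec]; have := List.sizeOf_lt_of_mem c.2; omega

def ws : OTree → List ℕ
  | .node cs => size (.node cs) :: (cs.attach.map (fun c => ws c.1)).flatten
decreasing_by simp only [OTree.node.sizeOf_spec]; have := List.sizeOf_lt_of_mem c.2; omega

def preorder : OTree → List OTree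
  | .node cs => .node cs :: (cs.attach.map (fun c => preorder c.1)).flatten
decreasing_by simp only [OTree.node.sizeOf_spec]; have := List.sizeOf_lt_of_mem c.2; omega

lemma size_pos (R : OTree) : 0 < R.size := by
  cases R with | node cs => simp only [OTree.size]; omega

end OTree

inductive RIso : OTree → OTree → Prop
  | node {cs cs' : List OTree} (l : List OTree) (hp : l.Perm cs')
      (hlen : cs.length = l.length)
      (h : ∀ (i : ℕ) (h1 : i < cs.length) (h2 : i < l.length), RIso cs[i] l[i]) :
      RIso (.node cs) (.node cs')

inductive Canonical : OTree → Prop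
  | node {cs : List OTree}
      (hchain : List.Chain' (fun u v => OTree.ws v ≤ OTree.ws u) cs)
      (h : ∀ c ∈ cs, Canonical c) : Canonical (.node cs)

def Centroidal {V : Type} [Fintype V] (G : SimpleGraph V) (u : V) : Prop :=
  ∀ v : ↥{x : V | x ≠ u},
    2 * Nat.card {w : ↥{x : V | x ≠ u} | (G.induce {x : V | x ≠ u}).Reachable v w}
      ≤ Fintype.card V

def IsParent (w : List ℕ) (i j : ℕ) : Prop :=
  i < j ∧ j < i + w.getD i 0 ∧ ∀ k, i < k → k < j → ¬ (j < k + w.getD k 0)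

def graphOf (R : OTree) : SimpleGraph (Fin R.size) :=
  SimpleGraph.fromRel (fun i j => IsParent R.ws i.1 j.1)

def rootIdx (R : OTree) : Fin R.size := ⟨0, R.size_pos⟩

def B (n : ℕ) : Set (List ℕ) := {s | ∃ R : OTree, Canonical R ∧ R.size = n ∧ R.ws = s}

def Succeq (s t : List ℕ) : Prop := t ≤ s ∨ s <+: t

def A (q n : ℕ) : Set (List ℕ × List ℕ) :=
  {p | p.1 ∈ B q ∧ p.2 ∈ B (n - q) ∧ Succeq p.1 p.2.tail}

def FwsUni {V : Type} [Fintype V] (G : SimpleGraph V) (s : List ℕ) : Prop :=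
  ∃ R : OTree, Canonical R ∧ R.ws = s ∧
    ∃ f : graphOf R ≃g G, Centroidal G (f (rootIdx R))

def FwsBi {V : Type} [Fintype V] (G : SimpleGraph V) (s : List ℕ) : Prop :=
  ∃ u v, u ≠ v ∧ G.Adj u v ∧ Centroidal G u ∧ Centroidal G v ∧
  ∃ A B : OTree, Canonical A ∧ Canonical B ∧ B.ws ≤ A.ws ∧ s = A.ws ++ B.ws ∧
  ∃ (fA : graphOf A ≃g (G.deleteEdges {s(u,v)}).induce
        {x | (G.deleteEdges {s(u,v)}).Reachable u x})
    (fB : graphOf B ≃g (G.deleteEdges {s(u,v)}).induce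
        {x | (G.deleteEdges {s(u,v)}).Reachable v x}),
    (fA (rootIdx A)).1 = u ∧ (fB (rootIdx B)).1 = v

theorem List.Lex.append_of_not_prefix {α : Type*} {r : α → α → Prop} {a b : List α}
    (z : List α) (h : List.Lex r a b) (hp : ¬ a <+: b) : List.Lex r (a ++ z) b := by
  induction h with
  | nil => exact absurd List.nil_prefix hp
  | cons h ih => exact .cons (ih fun hp' => hp (List.cons_prefix_cons.mpr ⟨rfl, hp'⟩))
  | rel h => exact .rel h

lemma succeq_nil (s : List ℕ) : Succeq s [] :=
  Or.inl ((List.lex_nil_or_eq_nil (r := (· < ·)) s).elim (fun h => le_of_lt h) fun h => h ▸ le_rfl)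

lemma succeq_append_of_le {a b : List ℕ} (z : List ℕ) (h : b ≤ a) (hp : b <+: a → b = a) :
    Succeq a (b ++ z) := by
  rcases lt_or_eq_of_le h with hlt | rfl
  · exact Or.inl (le_of_lt (List.Lex.append_of_not_prefix z hlt
      fun hpre => lt_irrefl a (hp hpre ▸ hlt)))
  · exact Or.inr (List.prefix_append b z)

namespace OTree

lemma ws_node (cs : List OTree) : ws (.node cs) = size (.node cs) :: (cs.map ws).flatten := by
  rw [ws, List.attach_map_val]

lemma size_node (cs : List OTree) : size (.node cs) = (cs.map size).sum + 1 := by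
  rw [size, List.attach_map_val]

lemma ws_node_cons (c : OTree) (cs : List OTree) :
    ws (.node (c :: cs)) = size (.node (c :: cs)) :: (c.ws ++ (cs.map ws).flatten) := by
  rw [ws_node, List.map_cons, List.flatten_cons]

lemma size_node_cons (c : OTree) (cs : List OTree) :
    size (.node (c :: cs)) = c.size + size (.node cs) := by
  rw [size_node, size_node, List.map_cons, List.sum_cons, Nat.add_assoc]

lemma length_ws : ∀ R : OTree, R.ws.length = R.size
  | .node cs => by
    rw [ws_node, size_node, List.length_cons, List.length_flatten, List.map_map]
    congr 2
    exact List.map_congr_left fun c hc => length_ws c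
decreasing_by simp only [OTree.node.sizeOf_spec]; have := List.sizeOf_lt_of_mem hc; omega

lemma head?_ws (R : OTree) : R.ws.head? = some R.size := by
  cases R with | node cs => rw [ws_node, List.head?_cons]

lemma ws_eq_of_prefix {R S : OTree} (h : R.ws <+: S.ws) : R.ws = S.ws := by
  refine h.eq_of_length ?_
  have hsize : R.size = S.size := by
    obtain ⟨t, ht⟩ := h
    simpa [← ht, head?_ws] using head?_ws S
  rw [length_ws, length_ws, hsize]

end OTree

open OTree

lemma Canonical.of_node_cons {c : OTree} {cs : List OTree} (h : Canonical (.node (c :: cs))) :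
    Canonical c ∧ Canonical (.node cs) := by
  cases h with
  | node hchain hcan =>
    exact ⟨hcan c List.mem_cons_self,
      .node hchain.tail fun x hx => hcan x (List.mem_cons_of_mem _ hx)⟩

lemma Canonical.succeq_flatten_ws {c : OTree} {cs : List OTree}
    (h : Canonical (.node (c :: cs))) : Succeq c.ws (cs.map ws).flatten := by
  cases h with
  | node hchain =>
    cases cs with
    | nil => exact succeq_nil _
    | cons c' cs =>
      rw [List.map_cons, List.flatten_cons]
      exact succeq_append_of_le _ (List.isChain_cons_cons.mp hchain).1 ws_eq_of_prefix

theorem stmt15 (c : OTree) (cs : List OTree)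
    (hC : Canonical (OTree.node (c :: cs))) :
    Canonical c ∧ Canonical (OTree.node cs) ∧
    c.ws = ((OTree.node (c :: cs)).ws.drop 1).take c.size ∧
    (OTree.node cs).ws =
      ((OTree.node (c :: cs)).size - c.size) ::
        (OTree.node (c :: cs)).ws.drop (c.size + 1) ∧
    Succeq c.ws (OTree.node cs).ws.tail ∧
    (c.ws, (OTree.node cs).ws) ∈ A c.size (OTree.node (c :: cs)).size := by
  obtain ⟨hc, hcs⟩ := hC.of_node_cons
  have hsucc : Succeq c.ws (OTree.node cs).ws.tail := by
    rw [ws_node, List.tail_cons]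
    exact hC.succeq_flatten_ws
  have hsize : (OTree.node (c :: cs)).size - c.size = (OTree.node cs).size := by
    rw [size_node_cons, Nat.add_sub_cancel_left]
  refine ⟨hc, hcs, ?_, ?_, hsucc, ⟨c, hc, rfl, rfl⟩, ⟨_, hcs, hsize.symm, rfl⟩, hsucc⟩
  · rw [ws_node_cons, List.drop_one, List.tail_cons, List.take_left' (length_ws c)]
  · rw [ws_node_cons, List.drop_succ_cons, List.drop_left' (length_ws c), hsize, ws_node]
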